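/- arXiv:2109.13002 — 5 statements merged into one kernel-verified Lean document; each statement's English description precedes it below -/
import Mathlib

section
/- Let v be a vertex of the order-k Voronoi diagram, i.e., a point equidistant from exactly three points a,b,c of S, lying in a face f(P_k). Then the circle through a, b, c centered at v encloses in its open disk exactly k−1 points of S if exactly one of a,b,c belongs to P_k (type I vertex), and exactly k−2 points of S if exactly two of a,b,c belong to P_k (type II vertex); moreover all enclosed points belong to P_k. -/
/-!
Since `v` lies in the face `f(P)`, every point of `S` strictly closer to `v` than a point of `P`
is itself in `P`, and every point of `P` is at least as close to `v` as any point of `S \ P`.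
In both cases the circle through `a, b, c` meets both `P` and `S \ P`, so the open disk
contains only points of `P`, and contains all points of `P` off the circle. Hence the enclosed
points are exactly `P \ {a, b, c}`, of which there are `k - #({a, b, c} ∩ P)`.
-/

open scoped Classical

noncomputable abbrev E2 := EuclideanSpace ℝ (Fin 2)

open Finset

/-- The closed face `f(P)` of the order-`#P` Voronoi diagram of `S`. -/
def voronoiFace {α : Type*} [Dist α] (S P : Finset α) : Set α :=
  {x | ∀ p ∈ P, ∀ q ∈ S, q ∉ P → dist x p ≤ dist x q}

namespace voronoiFace

variable {α : Type*} [Dist α] {S P T : Finset α} {v : α} {r : ℝ}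

theorem mem_of_dist_lt (hv : v ∈ voronoiFace S P) {p s : α} (hp : p ∈ P) (hs : s ∈ S)
    (hsp : dist v s < dist v p) : s ∈ P := by
  by_contra hsP
  exact (hv p hp s hs hsP).not_gt hsp

variable [DecidableEq α]

theorem filter_dist_lt_eq_sdiff (hv : v ∈ voronoiFace S P) (hPS : P ⊆ S)
    (hT : ∀ s ∈ S, dist v s = r ↔ s ∈ T) {p q : α} (hp : p ∈ T ∩ P) (hq : q ∈ T \ P)
    (hqS : q ∈ S) : S.filter (fun s => dist v s < r) = P \ T := by
  rw [mem_inter] at hp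
  rw [mem_sdiff] at hq
  have hpr : dist v p = r := (hT p (hPS hp.2)).mpr hp.1
  have hqr : dist v q = r := (hT q hqS).mpr hq.1
  ext s
  simp only [mem_filter, mem_sdiff]
  constructor
  · rintro ⟨hs, hsr⟩
    exact ⟨mem_of_dist_lt hv hp.2 hs (hpr ▸ hsr), fun hsT => hsr.ne ((hT s hs).mpr hsT)⟩
  · rintro ⟨hsP, hsT⟩
    have hs := hPS hsP
    exact ⟨hs, (hqr ▸ hv s hsP q hqS hq.2).lt_of_ne (mt (hT s hs).mp hsT)⟩

theorem card_filter_dist_lt_and_subset (hv : v ∈ voronoiFace S P) (hPS : P ⊆ S) (hTS : T ⊆ S)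
    (hT : ∀ s ∈ S, dist v s = r ↔ s ∈ T) (hpos : 0 < #(T ∩ P)) (hlt : #(T ∩ P) < #T) :
    #(S.filter (fun s => dist v s < r)) = #P - #(T ∩ P) ∧
      ∀ s ∈ S, dist v s < r → s ∈ P := by
  obtain ⟨p, hp⟩ := card_pos.mp hpos
  obtain ⟨q, hq⟩ : (T \ P).Nonempty := by
    rw [← card_pos, card_sdiff, inter_comm]
    omega
  have hfilter := filter_dist_lt_eq_sdiff hv hPS hT hp hq (hTS (mem_sdiff.mp hq).1)
  refine ⟨by rw [hfilter, card_sdiff], fun s hs hsr => ?_⟩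
  have hs' : s ∈ S.filter (fun s => dist v s < r) := mem_filter.mpr ⟨hs, hsr⟩
  exact (mem_sdiff.mp (hfilter ▸ hs')).1

end voronoiFace

/-- a vertex v of the order-k Voronoi diagram, equidistant (at distance r)
from exactly three points a,b,c of S and lying in the face f(P_k), has its circle
enclosing exactly k−1 points of S if it is of type I (|{a,b,c} ∩ P_k| = 1) and exactly
k−2 points if it is of type II (|{a,b,c} ∩ P_k| = 2); all enclosed points lie in P_k. -/
theorem orderk_vertex_circle_count
    (S P : Finset E2) (k : ℕ) (hPS : P ⊆ S) (hPcard : P.card = k)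
    (v : E2) (a b c : E2) (r : ℝ)
    (haS : a ∈ S) (hbS : b ∈ S) (hcS : c ∈ S)
    (hab : a ≠ b) (hac : a ≠ c) (hbc : b ≠ c)
    (hra : dist v a = r) (hrb : dist v b = r) (hrc : dist v c = r)
    (hother : ∀ s ∈ S, s ≠ a → s ≠ b → s ≠ c → dist v s ≠ r)
    (hv : ∀ p ∈ P, ∀ q ∈ S, q ∉ P → dist v p ≤ dist v q) :
    ((({a, b, c} : Finset E2) ∩ P).card = 1 →
      (S.filter (fun s => dist v s < r)).card = k - 1
        ∧ ∀ s ∈ S, dist v s < r → s ∈ P)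
    ∧ ((({a, b, c} : Finset E2) ∩ P).card = 2 →
      (S.filter (fun s => dist v s < r)).card = k - 2
        ∧ ∀ s ∈ S, dist v s < r → s ∈ P) := by
  have hTS : ({a, b, c} : Finset E2) ⊆ S := by
    simp only [insert_subset_iff, singleton_subset_iff]
    exact ⟨haS, hbS, hcS⟩
  have hT : ∀ s ∈ S, dist v s = r ↔ s ∈ ({a, b, c} : Finset E2) := by
    intro s hs
    simp only [mem_insert, mem_singleton]
    constructor
    · intro hsr
      by_contra! hne
      exact hother s hs hne.1 hne.2.1 hne.2.2 hsr
    · rintro (rfl | rfl | rfl) <;> assumption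
  have hTcard : ({a, b, c} : Finset E2).card = 3 := by simp [hab, hac, hbc]
  have count := voronoiFace.card_filter_dist_lt_and_subset hv hPS hTS hT
  subst hPcard
  refine ⟨fun h => ?_, fun h => ?_⟩
  · have := count (by omega) (by omega)
    rwa [h] at this
  · have := count (by omega) (by omega)
    rwa [h] at this
end

section
/- For each i ∈ S, the classical (order-1) Voronoi cell R_1(i) is contained in the kernel of the star-shaped region R_k(i): for every q ∈ R_1(i) and every p ∈ R_k(i), the segment from q to p is contained in R_k(i). In particular R_k(i) is star-shaped with respect to any point of R_1(i). -/
open scoped Classical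

lemma halfplane_convex (i j : E2) : Convex ℝ {y : E2 | dist y i ≤ dist y j} := by
  have hset : {y : E2 | dist y i ≤ dist y j}
      = {y : E2 | inner ℝ ((2:ℝ) • (j - i)) y ≤ ‖j‖ ^ 2 - ‖i‖ ^ 2} := by
    ext y
    simp only [Set.mem_setOf_eq, dist_eq_norm]
    rw [← pow_le_pow_iff_left₀ (norm_nonneg _) (norm_nonneg _) (two_ne_zero)]
    rw [@norm_sub_sq_real, @norm_sub_sq_real]
    rw [real_inner_smul_left, inner_sub_left, real_inner_comm j y, real_inner_comm i y]
    constructor <;> intro <;> linarith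
  rw [hset]
  exact convex_halfSpace_le (innerSL ℝ ((2:ℝ) • (j - i))).toLinearMap.isLinear _

/-- the order-1 Voronoi cell R_1(i) is contained in the kernel of the
star-shaped region R_k(i): for q ∈ R_1(i) and p ∈ R_k(i), the segment [q,p] lies in
R_k(i). -/
theorem R1_subset_kernel_Rk
    (S : Finset E2) (k : ℕ) (i : E2) (hi : i ∈ S)
    (q p : E2)
    (hq : ∀ j ∈ S, dist q i ≤ dist q j)
    (hp : (S.filter (fun j => dist p j < dist p i)).card ≤ k - 1) :
    ∀ x ∈ segment ℝ q p,
      (S.filter (fun j => dist x j < dist x i)).card ≤ k - 1 := by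
  intro x hx
  refine le_trans (Finset.card_le_card ?_) hp
  intro j hj
  rw [Finset.mem_filter] at hj ⊢
  refine ⟨hj.1, ?_⟩
  by_contra hle
  push_neg at hle
  have hxmem : x ∈ {y : E2 | dist y i ≤ dist y j} :=
    (halfplane_convex i j).segment_subset (hq j hj.1) hle hx
  exact absurd hj.2 (not_lt.mpr hxmem)
end

section
/- For a point set S with n points having the parabolic lift structure p_i = (i, i²) for i = 1,…,n, a point p_d lies strictly inside the circle through p_a, p_b, p_c (with a < b < c) if and only if d < a or b < d < c. Consequently, the number of triples (a,b,c) whose circumscribed circle contains exactly k points of S in its interior is c_k = (k+1)(n−k−2) for 0 ≤ k ≤ n−3. -/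
open scoped Classical

/-- The point (i, i²) of the parabolic lift. -/
noncomputable def parab (i : ℕ) : E2 :=
  (WithLp.equiv 2 (Fin 2 → ℝ)).symm ![(i : ℝ), (i : ℝ) ^ 2]

/-- `p_d` lies strictly inside the circle through `p_a, p_b, p_c`. -/
def InsideCircle (a b c d : ℕ) : Prop :=
  ∃ (o : E2) (r : ℝ), dist o (parab a) = r ∧ dist o (parab b) = r ∧
    dist o (parab c) = r ∧ dist o (parab d) < r

lemma dist_parab_sq (o : E2) (i : ℕ) :
    dist o (parab i) ^ 2 = (o 0 - i) ^ 2 + (o 1 - (i:ℝ)^2) ^ 2 := by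
  rw [EuclideanSpace.dist_eq, Real.sq_sqrt (by positivity)]
  simp [Fin.sum_univ_two, parab, Real.dist_eq, sq_abs]

lemma quartic (x y r a b c : ℝ) (hab : a ≠ b) (hbc : b ≠ c) (hac : a ≠ c)
    (ha : (x - a)^2 + (y - a^2)^2 = r^2)
    (hb : (x - b)^2 + (y - b^2)^2 = r^2)
    (hc : (x - c)^2 + (y - c^2)^2 = r^2) (d : ℝ) :
    (x - d)^2 + (y - d^2)^2 - r^2 = (d-a)*(d-b)*(d-c)*(d+a+b+c) := by
  have h1 : (b - a) * (2*x - a - b + (a+b)*(2*y - a^2 - b^2)) = 0 := by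
    linear_combination ha - hb
  have h1' : 2*x - a - b + (a+b)*(2*y - a^2 - b^2) = 0 :=
    (mul_eq_zero.mp h1).resolve_left (sub_ne_zero.mpr hab.symm)
  have h2 : (c - b) * (2*x - b - c + (b+c)*(2*y - b^2 - c^2)) = 0 := by
    linear_combination hb - hc
  have h2' : 2*x - b - c + (b+c)*(2*y - b^2 - c^2) = 0 :=
    (mul_eq_zero.mp h2).resolve_left (sub_ne_zero.mpr hbc.symm)
  have h3 : (c - a) * (1 + (a^2+b^2+c^2+a*b+b*c+c*a) - 2*y) = 0 := by
    linear_combination h1' - h2'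
  have hy : 2*y = 1 + (a^2+b^2+c^2+a*b+b*c+c*a) :=
    by linarith [(mul_eq_zero.mp h3).resolve_left (sub_ne_zero.mpr hac.symm)]
  have hx : 2*x = -(a+b)*(b+c)*(c+a) := by
    linear_combination h1' - (a+b)*hy
  linear_combination ha + (a - d)*hx + (a^2 - d^2)*hy

lemma sq_identity (A B C t : ℝ) :
    (-((A+B)*(B+C)*(C+A))/2 - t)^2 + ((1+(A^2+B^2+C^2+A*B+B*C+C*A))/2 - t^2)^2
      - ((-((A+B)*(B+C)*(C+A))/2 - A)^2 + ((1+(A^2+B^2+C^2+A*B+B*C+C*A))/2 - A^2)^2)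
    = (t-A)*(t-B)*(t-C)*(t+A+B+C) := by ring

lemma inside_iff (a b c d : ℕ) (ha1 : 1 ≤ a) (hd1 : 1 ≤ d) (hab : a < b) (hbc : b < c)
    (hda : d ≠ a) (hdb : d ≠ b) (hdc : d ≠ c) :
    InsideCircle a b c d ↔ (d < a ∨ (b < d ∧ d < c)) := by
  have hA : (1:ℝ) ≤ a := by exact_mod_cast ha1
  have hD : (1:ℝ) ≤ d := by exact_mod_cast hd1
  have hAB : (a:ℝ) < b := by exact_mod_cast hab
  have hBC : (b:ℝ) < c := by exact_mod_cast hbc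
  have hab' : (a:ℝ) ≠ b := ne_of_lt hAB
  have hbc' : (b:ℝ) ≠ c := ne_of_lt hBC
  have hac' : (a:ℝ) ≠ c := ne_of_lt (hAB.trans hBC)
  constructor
  · rintro ⟨o, r, h1, h2, h3, h4⟩
    have hr : 0 ≤ r := h1 ▸ dist_nonneg
    have e1 : (o 0 - a)^2 + (o 1 - (a:ℝ)^2)^2 = r^2 := by rw [← dist_parab_sq, h1]
    have e2 : (o 0 - b)^2 + (o 1 - (b:ℝ)^2)^2 = r^2 := by rw [← dist_parab_sq, h2]
    have e3 : (o 0 - c)^2 + (o 1 - (c:ℝ)^2)^2 = r^2 := by rw [← dist_parab_sq, h3]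
    have e4 : (o 0 - d)^2 + (o 1 - (d:ℝ)^2)^2 < r^2 := by
      rw [← dist_parab_sq]
      exact pow_lt_pow_left₀ h4 dist_nonneg (by norm_num)
    have key := quartic (o 0) (o 1) r a b c hab' hbc' hac' e1 e2 e3 d
    have hprod : ((d:ℝ)-a)*((d:ℝ)-b)*((d:ℝ)-c)*((d:ℝ)+a+b+c) < 0 := by
      rw [← key]; linarith
    have hsum : (0:ℝ) < (d:ℝ)+a+b+c := by linarith
    by_contra hcon
    push_neg at hcon
    obtain ⟨had, hor⟩ := hcon
    rcases (by omega : (a < d ∧ d < b) ∨ c < d) with ⟨h5, h6⟩ | h5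
    · have r1 : (a:ℝ) < d := by exact_mod_cast h5
      have r2 : (d:ℝ) < b := by exact_mod_cast h6
      have p1 : (0:ℝ) < ((d:ℝ)-b)*((d:ℝ)-c) :=
        mul_pos_of_neg_of_neg (by linarith) (by linarith)
      have p2 : (0:ℝ) < ((d:ℝ)-a)*((d:ℝ)+a+b+c) := mul_pos (by linarith) hsum
      have hre : (((d:ℝ)-a)*((d:ℝ)+a+b+c))*(((d:ℝ)-b)*((d:ℝ)-c))
          = ((d:ℝ)-a)*((d:ℝ)-b)*((d:ℝ)-c)*((d:ℝ)+a+b+c) := by ring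
      linarith [mul_pos p2 p1, hre.le, hre.ge]
    · have r1 : (c:ℝ) < d := by exact_mod_cast h5
      have p1 : (0:ℝ) < ((d:ℝ)-b)*((d:ℝ)-c) := mul_pos (by linarith) (by linarith)
      have p2 : (0:ℝ) < ((d:ℝ)-a)*((d:ℝ)+a+b+c) := mul_pos (by linarith) hsum
      have hre : (((d:ℝ)-a)*((d:ℝ)+a+b+c))*(((d:ℝ)-b)*((d:ℝ)-c))
          = ((d:ℝ)-a)*((d:ℝ)-b)*((d:ℝ)-c)*((d:ℝ)+a+b+c) := by ring
      linarith [mul_pos p2 p1, hre.le, hre.ge]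
  · intro hcond
    set A := (a:ℝ); set B := (b:ℝ); set C := (c:ℝ); set D := (d:ℝ)
    set x : ℝ := -((A+B)*(B+C)*(C+A))/2 with hxdef
    set y : ℝ := (1+(A^2+B^2+C^2+A*B+B*C+C*A))/2 with hydef
    set o : E2 := (WithLp.equiv 2 (Fin 2 → ℝ)).symm ![x, y] with hodef
    have ho0 : o 0 = x := by
      rw [hodef]; rfl
    have ho1 : o 1 = y := by
      rw [hodef]; rfl
    set r : ℝ := dist o (parab a) with hrdef
    have hr : 0 ≤ r := dist_nonneg
    have ea : r^2 = (x - A)^2 + (y - A^2)^2 := by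
      rw [hrdef, dist_parab_sq, ho0, ho1]
    have sqid : ∀ t : ℝ, (x - t)^2 + (y - t^2)^2 - r^2
        = (t-A)*(t-B)*(t-C)*(t+A+B+C) := by
      intro t; rw [ea, hxdef, hydef]; exact sq_identity A B C t
    have distsq : ∀ i : ℕ, dist o (parab i) ^ 2 = (x - i)^2 + (y - (i:ℝ)^2)^2 := by
      intro i; rw [dist_parab_sq, ho0, ho1]
    have hb : dist o (parab b) = r := by
      have h : dist o (parab b) ^ 2 = r ^ 2 := by
        rw [distsq b]
        have := sqid B
        have hz : (B-A)*(B-B)*(B-C)*(B+A+B+C) = 0 := by ring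
        linarith [this, hz.le, hz.ge]
      calc dist o (parab b) = Real.sqrt (dist o (parab b) ^ 2) :=
            (Real.sqrt_sq dist_nonneg).symm
        _ = Real.sqrt (r ^ 2) := by rw [h]
        _ = r := Real.sqrt_sq hr
    have hc : dist o (parab c) = r := by
      have h : dist o (parab c) ^ 2 = r ^ 2 := by
        rw [distsq c]
        have := sqid C
        have hz : (C-A)*(C-B)*(C-C)*(C+A+B+C) = 0 := by ring
        linarith [this, hz.le, hz.ge]
      calc dist o (parab c) = Real.sqrt (dist o (parab c) ^ 2) :=
            (Real.sqrt_sq dist_nonneg).symm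
        _ = Real.sqrt (r ^ 2) := by rw [h]
        _ = r := Real.sqrt_sq hr
    have hdlt : dist o (parab d) < r := by
      have hsum : (0:ℝ) < D+A+B+C := by
        have : (1:ℝ) ≤ D := Nat.one_le_cast.mpr hd1
        linarith
      have hneg : (D-A)*(D-B)*(D-C)*(D+A+B+C) < 0 := by
        rcases hcond with h | ⟨h1, h2⟩
        · have r1 : D < A := Nat.cast_lt.mpr h
          have p1 : (0:ℝ) < (D-B)*(D-C) :=
            mul_pos_of_neg_of_neg (by linarith) (by linarith)
          have p2 : (D-A)*(D+A+B+C) < 0 := mul_neg_of_neg_of_pos (by linarith) hsum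
          have hre : ((D-A)*(D+A+B+C))*((D-B)*(D-C)) = (D-A)*(D-B)*(D-C)*(D+A+B+C) := by
            ring
          linarith [mul_neg_of_neg_of_pos p2 p1, hre.le, hre.ge]
        · have r1 : B < D := Nat.cast_lt.mpr h1
          have r2 : D < C := Nat.cast_lt.mpr h2
          have p1 : (D-B)*(D-C) < 0 := mul_neg_of_pos_of_neg (by linarith) (by linarith)
          have p2 : (0:ℝ) < (D-A)*(D+A+B+C) := mul_pos (by linarith) hsum
          have hre : ((D-A)*(D+A+B+C))*((D-B)*(D-C)) = (D-A)*(D-B)*(D-C)*(D+A+B+C) := by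
            ring
          linarith [mul_neg_of_pos_of_neg p2 p1, hre.le, hre.ge]
      have h : dist o (parab d) ^ 2 < r ^ 2 := by
        rw [distsq d]; linarith [sqid D]
      have h0 : (0:ℝ) ≤ dist o (parab d) := dist_nonneg
      by_contra hge
      push_neg at hge
      nlinarith
    exact ⟨o, r, rfl, hb, hc, hdlt⟩

lemma count_d (n a b c : ℕ) (ha : 1 ≤ a) (hab : a < b) (hbc : b < c) (hc : c ≤ n) :
    ((Finset.Icc 1 n).filter (fun d => d ≠ a ∧ d ≠ b ∧ d ≠ c ∧
      (d < a ∨ (b < d ∧ d < c)))).card = (a - 1) + (c - b - 1) := by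
  have hset : (Finset.Icc 1 n).filter (fun d => d ≠ a ∧ d ≠ b ∧ d ≠ c ∧
      (d < a ∨ (b < d ∧ d < c))) = Finset.Ico 1 a ∪ Finset.Ioo b c := by
    ext e
    simp only [Finset.mem_filter, Finset.mem_Icc, Finset.mem_union, Finset.mem_Ico,
      Finset.mem_Ioo]
    omega
  rw [hset, Finset.card_union_of_disjoint, Nat.card_Ico, Nat.card_Ioo]
  exact Finset.disjoint_left.mpr (by
    intro e he1 he2
    simp only [Finset.mem_Ico, Finset.mem_Ioo] at he1 he2
    omega)

/-- for points p_i = (i, i²), 1 ≤ i ≤ n, the point p_d lies strictly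
inside the circle through p_a, p_b, p_c (a < b < c) iff d < a or b < d < c;
consequently the number of triples whose circle encloses exactly k points of S
is c_k = (k+1)(n−k−2). -/
theorem parabola_incircle_and_count (n k : ℕ) (hk : k + 3 ≤ n) :
    (∀ a ∈ Finset.Icc 1 n, ∀ b ∈ Finset.Icc 1 n, ∀ c ∈ Finset.Icc 1 n,
      ∀ d ∈ Finset.Icc 1 n, a < b → b < c → d ≠ a → d ≠ b → d ≠ c →
        (InsideCircle a b c d ↔ (d < a ∨ (b < d ∧ d < c))))
    ∧ ((Finset.Icc 1 n ×ˢ Finset.Icc 1 n ×ˢ Finset.Icc 1 n).filter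
        (fun t => t.1 < t.2.1 ∧ t.2.1 < t.2.2 ∧
          ((Finset.Icc 1 n).filter (fun d => d ≠ t.1 ∧ d ≠ t.2.1 ∧ d ≠ t.2.2 ∧
            (d < t.1 ∨ (t.2.1 < d ∧ d < t.2.2)))).card = k)).card
      = (k + 1) * (n - k - 2) := by
  constructor
  · intro a ha b hb c hc d hd hab hbc hda hdb hdc
    rw [Finset.mem_Icc] at ha hd
    exact inside_iff a b c d ha.1 hd.1 hab hbc hda hdb hdc
  · have hcongr : (Finset.Icc 1 n ×ˢ Finset.Icc 1 n ×ˢ Finset.Icc 1 n).filter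
        (fun t => t.1 < t.2.1 ∧ t.2.1 < t.2.2 ∧
          ((Finset.Icc 1 n).filter (fun d => d ≠ t.1 ∧ d ≠ t.2.1 ∧ d ≠ t.2.2 ∧
            (d < t.1 ∨ (t.2.1 < d ∧ d < t.2.2)))).card = k)
        = (Finset.Icc 1 n ×ˢ Finset.Icc 1 n ×ˢ Finset.Icc 1 n).filter
        (fun t => t.1 < t.2.1 ∧ t.2.1 < t.2.2 ∧
          (t.1 - 1) + (t.2.2 - t.2.1 - 1) = k) := by
      apply Finset.filter_congr
      rintro ⟨a, b, c⟩ ht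
      simp only [Finset.mem_product, Finset.mem_Icc] at ht
      obtain ⟨⟨ha1, _⟩, ⟨_, _⟩, ⟨_, hcn⟩⟩ := ht
      by_cases hab : a < b
      · by_cases hbc : b < c
        · simp only [hab, hbc, true_and]
          rw [count_d n a b c ha1 hab hbc hcn]
        · simp [hbc]
      · simp [hab]
    rw [hcongr]
    have himg : (Finset.Icc 1 n ×ˢ Finset.Icc 1 n ×ˢ Finset.Icc 1 n).filter
        (fun t => t.1 < t.2.1 ∧ t.2.1 < t.2.2 ∧
          (t.1 - 1) + (t.2.2 - t.2.1 - 1) = k)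
        = ((Finset.Icc 1 (k+1)) ×ˢ (Finset.Icc 1 (n-k-2))).image
          (fun p => (p.1, p.1 + p.2, p.2 + k + 2)) := by
      ext ⟨a, b, c⟩
      simp only [Finset.mem_filter, Finset.mem_product, Finset.mem_Icc, Finset.mem_image,
        Prod.exists, Prod.mk.injEq]
      constructor
      · rintro ⟨⟨⟨ha1, han⟩, ⟨hb1, hbn⟩, ⟨hc1, hcn⟩⟩, hab, hbc, hsum⟩
        exact ⟨a, b - a, ⟨⟨by omega, by omega⟩, by omega, by omega⟩, by omega, by omega,
          by omega⟩
      · rintro ⟨i, j, ⟨⟨hi1, hik⟩, hj1, hjn⟩, rfl, rfl, rfl⟩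
        refine ⟨⟨⟨by omega, by omega⟩, ⟨by omega, by omega⟩, by omega, by omega⟩,
          by omega, by omega, by omega⟩
    rw [himg, Finset.card_image_of_injOn, Finset.card_product, Nat.card_Icc, Nat.card_Icc]
    · congr 1
    · rintro ⟨i, j⟩ _ ⟨i', j'⟩ _ h
      simp only [Prod.mk.injEq] at h
      obtain ⟨h1, h2, h3⟩ := h
      simp only [Prod.mk.injEq]
      omega
end

section
/- If four points p_a, p_b, p_c, p_d in the plane are in convex position (vertices of a convex quadrilateral in that cyclic order) and no three are collinear, then exactly two of the four circumscribed disks determined by three of the points contain the fourth point in their interior. Specifically, p_d ∈ int D(p_a,p_b,p_c) iff p_b ∈ int D(p_a,p_c,p_d), and p_a ∈ int D(p_b,p_c,p_d) iff p_c ∈ int D(p_a,p_b,p_d), and the two pairs have opposite truth values when the four points are not cocircular. -/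
/-- `w` is strictly inside the disk whose boundary circle passes through `x, y, z`. -/
def InsideDisk (x y z w : E2) : Prop :=
  ∃ (o : E2) (r : ℝ), dist o x = r ∧ dist o y = r ∧ dist o z = r ∧ dist o w < r

/-- Every non-collinear triple has a unique circumcenter and circumradius. -/
lemma circ_aux (x y z : E2) (h : ¬ Collinear ℝ ({x, y, z} : Set E2)) :
    ∃ (o : E2) (r : ℝ), 0 ≤ r ∧ dist o x = r ∧ dist o y = r ∧ dist o z = r ∧
      ∀ o' r', dist o' x = r' → dist o' y = r' → dist o' z = r' → o' = o ∧ r' = r := by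
  have hai : AffineIndependent ℝ ![x, y, z] :=
    affineIndependent_iff_not_collinear_set.mpr h
  let s : Affine.Simplex ℝ E2 2 := ⟨![x, y, z], hai⟩
  have htop : affineSpan ℝ (Set.range s.points) = ⊤ := by
    rw [hai.affineSpan_eq_top_iff_card_eq_finrank_add_one]
    simp
  refine ⟨s.circumcenter, s.circumradius, ?_, ?_, ?_, ?_, ?_⟩
  · have := s.dist_circumcenter_eq_circumradius 0
    rw [← this]; exact dist_nonneg
  · exact s.dist_circumcenter_eq_circumradius' 0
  · exact s.dist_circumcenter_eq_circumradius' 1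
  · exact s.dist_circumcenter_eq_circumradius' 2
  · intro o' r' hx hy hz
    have hmem : o' ∈ affineSpan ℝ (Set.range s.points) := htop ▸ AffineSubspace.mem_top ℝ E2 o'
    have hr : ∀ i : Fin 3, dist (s.points i) o' = r' := by
      intro i
      fin_cases i <;> simp only [s] <;> rw [dist_comm] <;> first | exact hx | exact hy | exact hz
    refine ⟨s.eq_circumcenter_of_dist_eq hmem hr, s.eq_circumradius_of_dist_eq hmem hr⟩

/-- The "power difference" of two circles is affine along convex combinations. -/
lemma key_aux (o1 o2 u v : E2) (r1 r2 s t : ℝ) (hst : s + t = 1) :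
    (dist o1 (s • u + t • v) ^ 2 - r1 ^ 2) - (dist o2 (s • u + t • v) ^ 2 - r2 ^ 2)
    = s * ((dist o1 u ^ 2 - r1 ^ 2) - (dist o2 u ^ 2 - r2 ^ 2))
      + t * ((dist o1 v ^ 2 - r1 ^ 2) - (dist o2 v ^ 2 - r2 ^ 2)) := by
  have hn : ∀ w x : E2, dist w x ^ 2
      = ‖w‖ ^ 2 - 2 * (inner ℝ w x : ℝ) + ‖x‖ ^ 2 := by
    intro w x
    rw [dist_eq_norm, norm_sub_sq_real]
  simp only [hn, inner_add_right, real_inner_smul_right]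
  linear_combination (r1 ^ 2 + ‖o2‖ ^ 2 - r2 ^ 2 - ‖o1‖ ^ 2) * hst

lemma insideDisk_iff_sq (x y z w o : E2) (r : ℝ) (hr : 0 ≤ r)
    (hx : dist o x = r) (hy : dist o y = r) (hz : dist o z = r)
    (uniq : ∀ o' r', dist o' x = r' → dist o' y = r' → dist o' z = r' → o' = o ∧ r' = r) :
    InsideDisk x y z w ↔ dist o w ^ 2 - r ^ 2 < 0 := by
  constructor
  · rintro ⟨o', r', hx', hy', hz', hw⟩
    obtain ⟨ho, hr'⟩ := uniq o' r' hx' hy' hz'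
    subst ho; subst hr'
    nlinarith [dist_nonneg (α := E2) (x := o') (y := w)]
  · intro h
    exact ⟨o, r, hx, hy, hz, by nlinarith [dist_nonneg (α := E2) (x := o) (y := w)]⟩

set_option maxHeartbeats 1000000 in
/-- for four points in convex position (in cyclic order a, b, c, d,
i.e. the diagonals [a,c] and [b,d] meet), no three collinear and not cocircular,
exactly two of the four circumscribed disks contain the fourth point:
d ∈ int D(a,b,c) ↔ b ∈ int D(a,c,d), a ∈ int D(b,c,d) ↔ c ∈ int D(a,b,d),
and the two pairs have opposite truth values. -/
theorem incircle_pairs_convex_quad (a b c d : E2)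
    (hconv : (segment ℝ a c ∩ segment ℝ b d).Nonempty)
    (h1 : ¬ Collinear ℝ ({a, b, c} : Set E2))
    (h2 : ¬ Collinear ℝ ({a, b, d} : Set E2))
    (h3 : ¬ Collinear ℝ ({a, c, d} : Set E2))
    (h4 : ¬ Collinear ℝ ({b, c, d} : Set E2))
    (hnococ : ¬ ∃ (o : E2) (r : ℝ),
      dist o a = r ∧ dist o b = r ∧ dist o c = r ∧ dist o d = r) :
    (InsideDisk a b c d ↔ InsideDisk a c d b)
    ∧ (InsideDisk b c d a ↔ InsideDisk a b d c)
    ∧ (InsideDisk a b c d ↔ ¬ InsideDisk b c d a) := by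
  obtain ⟨p, hpac, hpbd⟩ := hconv
  obtain ⟨s1, s2, hs1, hs2, hs, hpac'⟩ := hpac
  obtain ⟨t1, t2, ht1, ht2, ht, hpbd'⟩ := hpbd
  obtain ⟨o1, r1, hr1, d1a, d1b, d1c, u1⟩ := circ_aux a b c h1
  obtain ⟨o2, r2, hr2, d2a, d2b, d2d, u2⟩ := circ_aux a b d h2
  obtain ⟨o3, r3, hr3, d3a, d3c, d3d, u3⟩ := circ_aux a c d h3
  obtain ⟨o4, r4, hr4, d4b, d4c, d4d, u4⟩ := circ_aux b c d h4
  -- translations of InsideDisk into sign conditions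
  have iffA : InsideDisk a b c d ↔ dist o1 d ^ 2 - r1 ^ 2 < 0 :=
    insideDisk_iff_sq a b c d o1 r1 hr1 d1a d1b d1c u1
  have iffB : InsideDisk a c d b ↔ dist o3 b ^ 2 - r3 ^ 2 < 0 :=
    insideDisk_iff_sq a c d b o3 r3 hr3 d3a d3c d3d u3
  have iffC : InsideDisk a b d c ↔ dist o2 c ^ 2 - r2 ^ 2 < 0 :=
    insideDisk_iff_sq a b d c o2 r2 hr2 d2a d2b d2d u2
  have iffD : InsideDisk b c d a ↔ dist o4 a ^ 2 - r4 ^ 2 < 0 :=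
    insideDisk_iff_sq b c d a o4 r4 hr4 d4b d4c d4d u4
  -- the four "power" quantities are nonzero (no cocircularity)
  have sqne : ∀ (o : E2) (r : ℝ), 0 ≤ r → dist o a = r → dist o b = r → dist o c = r →
      dist o d ^ 2 - r ^ 2 = 0 → False := by
    intro o r hr ha hb hc h
    refine hnococ ⟨o, r, ha, hb, hc, ?_⟩
    have hd0 : (0:ℝ) ≤ dist o d := dist_nonneg
    have h2 : |dist o d| = |r| := (sq_eq_sq_iff_abs_eq_abs _ _).mp (by linarith)
    rwa [abs_of_nonneg hd0, abs_of_nonneg hr] at h2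
  have hAne : dist o1 d ^ 2 - r1 ^ 2 ≠ 0 := fun h =>
    sqne o1 r1 hr1 d1a d1b d1c h
  have hBne : dist o3 b ^ 2 - r3 ^ 2 ≠ 0 := by
    intro h
    have hb : dist o3 b = r3 := by
      have hb0 : (0:ℝ) ≤ dist o3 b := dist_nonneg
      have h2 : |dist o3 b| = |r3| := (sq_eq_sq_iff_abs_eq_abs _ _).mp (by linarith)
      rwa [abs_of_nonneg hb0, abs_of_nonneg hr3] at h2
    exact hnococ ⟨o3, r3, d3a, hb, d3c, d3d⟩
  have hCne : dist o2 c ^ 2 - r2 ^ 2 ≠ 0 := by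
    intro h
    have hc : dist o2 c = r2 := by
      have hc0 : (0:ℝ) ≤ dist o2 c := dist_nonneg
      have h2 : |dist o2 c| = |r2| := (sq_eq_sq_iff_abs_eq_abs _ _).mp (by linarith)
      rwa [abs_of_nonneg hc0, abs_of_nonneg hr2] at h2
    exact hnococ ⟨o2, r2, d2a, d2b, hc, d2d⟩
  have hDne : dist o4 a ^ 2 - r4 ^ 2 ≠ 0 := by
    intro h
    have ha : dist o4 a = r4 := by
      have ha0 : (0:ℝ) ≤ dist o4 a := dist_nonneg
      have h2 : |dist o4 a| = |r4| := (sq_eq_sq_iff_abs_eq_abs _ _).mp (by linarith)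
      rwa [abs_of_nonneg ha0, abs_of_nonneg hr4] at h2
    exact hnococ ⟨o4, r4, ha, d4b, d4c, d4d⟩
  -- the three key linear relations
  have E1 : t1 * (dist o3 b ^ 2 - r3 ^ 2) = t2 * (dist o1 d ^ 2 - r1 ^ 2) := by
    have e1 := key_aux o1 o3 a c r1 r3 s1 s2 hs
    have e2 := key_aux o1 o3 b d r1 r3 t1 t2 ht
    rw [hpac', d1a, d3a, d1c, d3c] at e1
    rw [hpbd', d1b, d3d] at e2
    linear_combination e2 - e1
  have E2' : s1 * (dist o4 a ^ 2 - r4 ^ 2) = s2 * (dist o2 c ^ 2 - r2 ^ 2) := by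
    have e1 := key_aux o4 o2 b d r4 r2 t1 t2 ht
    have e2 := key_aux o4 o2 a c r4 r2 s1 s2 hs
    rw [hpbd', d4b, d2b, d4d, d2d] at e1
    rw [hpac', d2a, d4c] at e2
    linear_combination e1 - e2
  have E3 : s1 * (dist o4 a ^ 2 - r4 ^ 2) + t2 * (dist o1 d ^ 2 - r1 ^ 2) = 0 := by
    have e1 := key_aux o1 o4 a c r1 r4 s1 s2 hs
    have e2 := key_aux o1 o4 b d r1 r4 t1 t2 ht
    rw [hpac', d1a, d1c, d4c] at e1
    rw [hpbd', d1b, d4b, d4d] at e2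
    linear_combination e1 - e2
  -- positivity of the coefficients
  have hs1p : 0 < s1 := by
    rcases hs1.lt_or_eq with h | h
    · exact h
    · exfalso
      have ht2z : t2 * (dist o1 d ^ 2 - r1 ^ 2) = 0 := by rw [← E3, ← h]; ring
      have ht2' : t2 = 0 := by
        rcases mul_eq_zero.mp ht2z with h' | h'
        · exact h'
        · exact absurd h' hAne
      have ht1z : t1 * (dist o3 b ^ 2 - r3 ^ 2) = 0 := by rw [E1, ht2']; ring
      have ht1' : t1 = 0 := by
        rcases mul_eq_zero.mp ht1z with h' | h'
        · exact h'
        · exact absurd h' hBne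
      rw [ht1', ht2'] at ht; norm_num at ht
  have ht2p : 0 < t2 := by
    rcases ht2.lt_or_eq with h | h
    · exact h
    · exfalso
      have ht1z : t1 * (dist o3 b ^ 2 - r3 ^ 2) = 0 := by rw [E1, ← h]; ring
      have ht1' : t1 = 0 := by
        rcases mul_eq_zero.mp ht1z with h' | h'
        · exact h'
        · exact absurd h' hBne
      rw [ht1', ← h] at ht; norm_num at ht
  have ht1p : 0 < t1 := by
    rcases ht1.lt_or_eq with h | h
    · exact h
    · exfalso
      have hAz : t2 * (dist o1 d ^ 2 - r1 ^ 2) = 0 := by rw [← E1, ← h]; ring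
      rcases mul_eq_zero.mp hAz with h' | h'
      · rw [← h, h'] at ht; norm_num at ht
      · exact absurd h' hAne
  have hs2p : 0 < s2 := by
    rcases hs2.lt_or_eq with h | h
    · exact h
    · exfalso
      have hDz : s1 * (dist o4 a ^ 2 - r4 ^ 2) = 0 := by rw [E2', ← h]; ring
      rcases mul_eq_zero.mp hDz with h' | h'
      · rw [← h, h'] at hs; norm_num at hs
      · exact absurd h' hDne
  -- sign conclusions
  refine ⟨?_, ?_, ?_⟩
  · rw [iffA, iffB]
    constructor
    · intro hA
      by_contra hB
      push_neg at hB
      nlinarith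
    · intro hB
      by_contra hA
      push_neg at hA
      rcases hA.lt_or_eq with h | h
      · nlinarith
      · exact hAne h.symm
  · rw [iffD, iffC]
    constructor
    · intro hD
      by_contra hC
      push_neg at hC
      nlinarith
    · intro hC
      by_contra hD
      push_neg at hD
      rcases hD.lt_or_eq with h | h
      · nlinarith
      · exact hDne h.symm
  · rw [iffA, iffD]
    constructor
    · intro hA hD
      nlinarith
    · intro hD
      rcases lt_trichotomy (dist o4 a ^ 2 - r4 ^ 2) 0 with h | h | h
      · exact absurd h hD
      · exact absurd h hDne
      · nlinarith
end

section
/- Let v be a point equidistant at distance r from three points a, b, c of S with exactly m points of S inside the open disk of radius r around v (and no other point of S at distance r). If one fixes b and c and moves the center along the bisector b_{bc} toward the side containing a, then for centers x near v on that side, the open disk centered at x through b and c contains exactly m+1 points of S (gaining a); moving to the other side it contains exactly m points (losing nothing, a exits only through the boundary). Formally: the function x ↦ |S ∩ openDisk(x, dist(x,b))| restricted to b_{bc} changes by exactly the membership of a as x crosses v, locally near v. -/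
open scoped Classical

/-- Key perturbation lemma: if the center moves less than half the gap, all strict
inequalities with respect to the circle are preserved. -/
lemma sign_preserved (x v s b : E2) (r : ℝ) (hvb : dist v b = r)
    (hgap : 2 * dist x v < |dist v s - r|) :
    (dist x s < dist x b ↔ dist v s < r) := by
  have h1 : |dist x s - dist v s| ≤ dist x v := abs_dist_sub_le x v s
  have h2 : |dist x b - dist v b| ≤ dist x v := abs_dist_sub_le x v b
  rw [hvb] at h2
  rw [abs_le] at h1 h2
  rcases lt_or_gt_of_ne (fun h : dist v s = r => by simp [h] at hgap; linarith [dist_nonneg (x := x) (y := v)]) with hlt | hgt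
  · constructor
    · intro _; exact hlt
    · intro _
      have : |dist v s - r| = -(dist v s - r) := abs_of_neg (by linarith)
      rw [this] at hgap
      linarith
  · have : |dist v s - r| = dist v s - r := abs_of_pos (by linarith)
    rw [this] at hgap
    constructor
    · intro h; linarith
    · intro h; linarith

/-- moving the center of the circle through b and c along the bisector
b_{bc} from the circumcenter v of a, b, c: near v, the number of points of S\{b,c}
strictly inside the disk is N₀ + 1 on the side where a gets closer and N₀ on the
other side. -/
theorem circle_count_across_vertex (S : Finset E2) (a b c : E2)
    (ha : a ∈ S) (hb : b ∈ S) (hc : c ∈ S)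
    (hab : a ≠ b) (hac : a ≠ c) (hbc : b ≠ c)
    (hncol : ¬ Collinear ℝ ({a, b, c} : Set E2))
    (v : E2) (r : ℝ)
    (hva : dist v a = r) (hvb : dist v b = r) (hvc : dist v c = r)
    (hother : ∀ s ∈ S, s ≠ a → s ≠ b → s ≠ c → dist v s ≠ r) :
    ∃ ε > 0, ∀ x : E2, dist x b = dist x c → x ≠ v → dist x v < ε →
      ((dist x a < dist x b →
        (S.filter (fun s => s ≠ b ∧ s ≠ c ∧ dist x s < dist x b)).card
          = (S.filter (fun s => s ≠ a ∧ s ≠ b ∧ s ≠ c ∧ dist v s < r)).card + 1)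
      ∧ (dist x b < dist x a →
        (S.filter (fun s => s ≠ b ∧ s ≠ c ∧ dist x s < dist x b)).card
          = (S.filter (fun s => s ≠ a ∧ s ≠ b ∧ s ≠ c ∧ dist v s < r)).card)) := by
  classical
  set T : Finset ℝ :=
    insert (1 : ℝ)
      ((S.filter (fun s => s ≠ a ∧ s ≠ b ∧ s ≠ c)).image (fun s => |dist v s - r| / 2))
    with hT
  have hTne : T.Nonempty := ⟨1, Finset.mem_insert_self _ _⟩
  refine ⟨T.min' hTne, ?_, ?_⟩
  · rw [gt_iff_lt, lt_iff_not_ge]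
    intro hle
    have := Finset.min'_mem T hTne
    rcases Finset.mem_insert.mp this with h1 | h1
    · rw [h1] at hle; linarith
    · rcases Finset.mem_image.mp h1 with ⟨s, hs, hval⟩
      rcases Finset.mem_filter.mp hs with ⟨hsS, hsa, hsb, hsc⟩
      have hne := hother s hsS hsa hsb hsc
      have : |dist v s - r| > 0 := abs_pos.mpr (sub_ne_zero.mpr hne)
      rw [← hval] at hle; linarith
  · intro x _ _ hxv
    have key : ∀ s ∈ S, s ≠ a → s ≠ b → s ≠ c →
        (dist x s < dist x b ↔ dist v s < r) := by
      intro s hsS hsa hsb hsc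
      apply sign_preserved x v s b r hvb
      have : |dist v s - r| / 2 ∈ T := by
        apply Finset.mem_insert_of_mem
        exact Finset.mem_image.mpr ⟨s, Finset.mem_filter.mpr ⟨hsS, hsa, hsb, hsc⟩, rfl⟩
      have := Finset.min'_le T _ this
      linarith
    constructor
    · intro hxa
      have hset : S.filter (fun s => s ≠ b ∧ s ≠ c ∧ dist x s < dist x b)
          = insert a (S.filter (fun s => s ≠ a ∧ s ≠ b ∧ s ≠ c ∧ dist v s < r)) := by
        ext s
        simp only [Finset.mem_insert, Finset.mem_filter]
        constructor
        · rintro ⟨hsS, hsb, hsc, hlt⟩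
          by_cases hsa : s = a
          · exact Or.inl hsa
          · exact Or.inr ⟨hsS, hsa, hsb, hsc, (key s hsS hsa hsb hsc).mp hlt⟩
        · rintro (rfl | ⟨hsS, hsa, hsb, hsc, hlt⟩)
          · exact ⟨ha, hab, hac, hxa⟩
          · exact ⟨hsS, hsb, hsc, (key s hsS hsa hsb hsc).mpr hlt⟩
      rw [hset, Finset.card_insert_of_notMem]
      intro hmem
      exact (Finset.mem_filter.mp hmem).2.1 rfl
    · intro hxa
      congr 1
      ext s
      simp only [Finset.mem_filter]
      constructor
      · rintro ⟨hsS, hsb, hsc, hlt⟩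
        have hsa : s ≠ a := by
          rintro rfl
          exact absurd hlt (not_lt.mpr (le_of_lt hxa))
        exact ⟨hsS, hsa, hsb, hsc, (key s hsS hsa hsb hsc).mp hlt⟩
      · rintro ⟨hsS, hsa, hsb, hsc, hlt⟩
        exact ⟨hsS, hsb, hsc, (key s hsS hsa hsb hsc).mpr hlt⟩
end
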